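/- Let α > 0, C > 0 and let π : ℝ → [0,∞) be measurable with π = 0 on (−∞,0] and lim_{x→∞} π(x)e^{αx} = C. Let μ be a nonzero finite Borel measure on ℝ with μ((−∞,0]) = 0 and ∫_{(0,∞)} z dμ(z) < ∞. Then liminf_{x→∞} (1/π(x)) ∫_0^x μ((x−z,∞)) π(z) dz > ∫_{(0,∞)} z dμ(z); equivalently, the drift coefficient φ(x) = −(1/π(x)) ∫_0^x μ((x−z,∞)) π(z) dz satisfies limsup_{x→∞} φ(x) < −∫_{(0,∞)} z dμ(z). -/

import Mathlib

open MeasureTheory Set Filter Topology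

/-! By the layer-cake formula the mean jump is `∫₀^∞ μ(t,∞) dt`. After the substitution
`u = x - z` the ratio is `∫₀^x μ(u,∞) π(x-u)/π(x) du`, and `π(x-u)/π(x) → e^{αu}` because
`π(x) e^{αx} → C ≠ 0`. Fatou's lemma bounds the liminf of the ratio below by
`∫₀^∞ μ(u,∞) e^{αu} du`, which is strictly larger than the finite mean jump since
`e^{αu} > 1` for `u > 0` and the tail `μ(u,∞)` is positive for small `u > 0`. -/

lemma measurable_measure_Ioi (μ : Measure ℝ) : Measurable fun u => μ (Ioi u) :=
  Antitone.measurable fun _ _ hab => measure_mono (Ioi_subset_Ioi hab)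

lemma exists_lt_measure_Ioi_ne_zero {μ : Measure ℝ} {a : ℝ} (h : μ (Ioi a) ≠ 0) :
    ∃ t, a < t ∧ μ (Ioi t) ≠ 0 := by
  by_contra! hnull
  obtain ⟨u, -, hu_gt, hu_lim⟩ := exists_seq_strictAnti_tendsto a
  refine h (measure_mono_null (fun x hx => ?_)
    (measure_iUnion_null fun n => hnull (u n) (hu_gt n)))
  obtain ⟨n, hn⟩ := (hu_lim.eventually (gt_mem_nhds hx)).exists
  exact mem_iUnion.2 ⟨n, hn⟩

lemma lintegral_Ioi_ofReal_eq_lintegral_measure_Ioi (μ : Measure ℝ) :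
    ∫⁻ z in Ioi 0, ENNReal.ofReal z ∂μ = ∫⁻ t in Ioi 0, μ (Ioi t) := by
  rw [lintegral_eq_lintegral_meas_lt (μ.restrict (Ioi 0))
    (ae_restrict_of_forall_mem measurableSet_Ioi fun z hz => le_of_lt hz) aemeasurable_id]
  refine setLIntegral_congr_fun measurableSet_Ioi fun t ht => ?_
  change μ.restrict (Ioi 0) (Ioi t) = _
  rw [Measure.restrict_apply measurableSet_Ioi, Ioi_inter_Ioi, sup_eq_left.2 (le_of_lt ht)]

lemma setLIntegral_Ioo_comp_sub_left (f : ℝ → ENNReal) (x : ℝ) :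
    ∫⁻ z in Ioo 0 x, f (x - z) = ∫⁻ z in Ioo 0 x, f z := by
  have h := (Measure.measurePreserving_sub_left volume x).setLIntegral_comp_preimage_emb
    (MeasurableEquiv.subLeft x).measurableEmbedding f (Ioo 0 x)
  rwa [preimage_const_sub_Ioo, sub_self, sub_zero] at h

lemma tendsto_div_comp_sub_of_tendsto_mul_exp {π : ℝ → ℝ} {α C : ℝ} (hC : C ≠ 0)
    (hlim : Tendsto (fun x => π x * Real.exp (α * x)) atTop (𝓝 C)) (u : ℝ) :
    Tendsto (fun x => π (x - u) / π x) atTop (𝓝 (Real.exp (α * u))) := by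
  have hshift := hlim.comp (tendsto_atTop_add_const_right atTop (-u) tendsto_id)
  have hratio := (hshift.div hlim hC).mul_const (Real.exp (α * u))
  rw [div_self hC, one_mul] at hratio
  refine hratio.congr fun x => ?_
  simp only [Function.comp_apply, Pi.div_apply, id_eq, ← sub_eq_add_neg]
  rw [mul_div_mul_comm, mul_assoc, ← Real.exp_sub, ← Real.exp_add]
  ring_nf
  simp

lemma setLIntegral_measure_Ioi_lt_mul_exp {α : ℝ} (hα : 0 < α) (μ : Measure ℝ)
    [IsFiniteMeasure μ] (hμ : μ (Ioi 0) ≠ 0) (hfin : ∫⁻ t in Ioi 0, μ (Ioi t) ≠ ⊤) :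
    ∫⁻ t in Ioi 0, μ (Ioi t) <
      ∫⁻ t in Ioi 0, μ (Ioi t) * ENNReal.ofReal (Real.exp (α * t)) := by
  obtain ⟨t₀, ht₀, hμt₀⟩ := exists_lt_measure_Ioi_ne_zero hμ
  have one_lt_exp : ∀ t, 0 < t → 1 < ENNReal.ofReal (Real.exp (α * t)) := fun t ht => by
    rw [← ENNReal.ofReal_one, ENNReal.ofReal_lt_ofReal_iff (Real.exp_pos _)]
    exact Real.one_lt_exp_iff.2 (mul_pos hα ht)
  refine lintegral_strict_mono_of_ae_le_of_ae_lt_on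
    ((measurable_measure_Ioi μ).mul (by fun_prop)).aemeasurable hfin
    (ae_restrict_of_forall_mem measurableSet_Ioi fun t ht =>
      le_mul_of_one_le_right' (one_lt_exp t ht).le) (s := Ioo 0 t₀) ?_
    (ae_of_all _ fun t ht => ?_)
  · rw [Measure.restrict_apply measurableSet_Ioo, Ioo_inter_Ioi, sup_eq_left.2 le_rfl,
      Real.volume_Ioo]
    simpa using ht₀
  · have hpos : μ (Ioi t) ≠ 0 :=
      ne_bot_of_le_ne_bot hμt₀ (measure_mono (Ioi_subset_Ioi ht.2.le))
    simpa using ENNReal.mul_lt_mul_right hpos (measure_ne_top μ _) (one_lt_exp t ht.1)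

lemma setLIntegral_measure_Ioi_mul_exp_le_liminf {π : ℝ → ℝ} {α C : ℝ} (hC : 0 < C)
    (hπ : Measurable π) (hlim : Tendsto (fun x => π x * Real.exp (α * x)) atTop (𝓝 C))
    (μ : Measure ℝ) :
    ∫⁻ u in Ioi 0, μ (Ioi u) * ENNReal.ofReal (Real.exp (α * u)) ≤
      liminf (fun x => (∫⁻ z in Ioo 0 x, μ (Ioi (x - z)) * ENNReal.ofReal (π z))
        / ENNReal.ofReal (π x)) atTop := by
  set G : ℝ → ℝ → ENNReal := fun x =>
    (Iio x).indicator (fun u => μ (Ioi u) * ENNReal.ofReal (π (x - u)))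
  set F : ℝ → ℝ → ENNReal := fun x u => G x u / ENNReal.ofReal (π x)
  have hG_meas : ∀ x, Measurable (G x) := fun x =>
    ((measurable_measure_Ioi μ).mul (by fun_prop)).indicator measurableSet_Iio
  have hF_meas : ∀ x, Measurable (F x) := fun x => (hG_meas x).div_const _
  have hF_int : ∀ x, ∫⁻ u in Ioi 0, F x u =
      (∫⁻ z in Ioo 0 x, μ (Ioi (x - z)) * ENNReal.ofReal (π z)) / ENNReal.ofReal (π x) := by
    intro x
    simp only [F, div_eq_mul_inv]
    rw [lintegral_mul_const _ (hG_meas x), lintegral_indicator measurableSet_Iio,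
      Measure.restrict_restrict measurableSet_Iio, Iio_inter_Ioi,
      ← setLIntegral_Ioo_comp_sub_left]
    simp only [sub_sub_cancel]
  have hF_lim : ∀ u ∈ Ioi (0 : ℝ),
      Tendsto (fun x => F x u) atTop (𝓝 (μ (Ioi u) * ENNReal.ofReal (Real.exp (α * u)))) := by
    intro u hu
    have hπ_pos : ∀ᶠ x in atTop, 0 < π x := by
      filter_upwards [hlim.eventually_const_lt hC] with x hx
      exact pos_of_mul_pos_left hx (Real.exp_pos _).le
    have hlim_u := ENNReal.Tendsto.const_mul
      (ENNReal.tendsto_ofReal (tendsto_div_comp_sub_of_tendsto_mul_exp hC.ne' hlim u))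
      (a := μ (Ioi u)) (Or.inl (ENNReal.ofReal_pos.2 (Real.exp_pos _)).ne')
    refine hlim_u.congr' ?_
    filter_upwards [hπ_pos, eventually_gt_atTop u] with x hx hux
    simp only [F, G, indicator_of_mem (mem_Iio.2 hux), mul_div_assoc,
      ENNReal.ofReal_div_of_pos hx]
  calc _ = ∫⁻ u in Ioi 0, liminf (fun x => F x u) atTop :=
        setLIntegral_congr_fun measurableSet_Ioi fun u hu => (hF_lim u hu).liminf_eq.symm
    _ ≤ liminf (fun x => ∫⁻ u in Ioi 0, F x u) atTop := lintegral_liminf_le hF_meas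
    _ = _ := by simp only [hF_int]

theorem liminf_tail_convolution_ratio_gt_mean_jump_general
    (α C : ℝ) (hα : 0 < α) (hC : 0 < C)
    (π : ℝ → ℝ) (hπ_meas : Measurable π)
    (hlim : Tendsto (fun x => π x * Real.exp (α * x)) atTop (nhds C))
    (μ : Measure ℝ) [IsFiniteMeasure μ] (hμne : μ ≠ 0) (hμ : μ (Iic 0) = 0)
    (hmom : ∫⁻ z in Ioi 0, ENNReal.ofReal z ∂μ < ⊤) :
    (∫⁻ z in Ioi 0, ENNReal.ofReal z ∂μ)
      < Filter.liminf
          (fun x => (∫⁻ z in Ioo 0 x, μ (Ioi (x - z)) * ENNReal.ofReal (π z))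
            / ENNReal.ofReal (π x)) atTop := by
  have hμ_Ioi : μ (Ioi 0) ≠ 0 := fun h => hμne <| Measure.measure_univ_eq_zero.1 <| by
    rw [← Iic_union_Ioi (a := 0)]
    exact measure_union_null hμ h
  rw [lintegral_Ioi_ofReal_eq_lintegral_measure_Ioi] at hmom ⊢
  exact (setLIntegral_measure_Ioi_lt_mul_exp hα μ hμ_Ioi hmom.ne).trans_le
    (setLIntegral_measure_Ioi_mul_exp_le_liminf hC hπ_meas hlim μ)

/-- the key drift condition: the asymptotic lower bound of
`(μ̄ₛ*π)(x)/π(x)` strictly exceeds the mean jump size `∫_{(0,∞)} z dμ(z)`;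
equivalently `limsup φ < −∫ z dμ` for the drift coefficient `φ = −(μ̄ₛ*π)/π`. -/
theorem liminf_tail_convolution_ratio_gt_mean_jump
    (α C : ℝ) (hα : 0 < α) (hC : 0 < C)
    (π : ℝ → ℝ) (hπ_meas : Measurable π) (hπ_nonneg : ∀ x, 0 ≤ π x)
    (hπ_zero : ∀ x ≤ 0, π x = 0)
    (hlim : Tendsto (fun x => π x * Real.exp (α * x)) atTop (nhds C))
    (μ : Measure ℝ) [IsFiniteMeasure μ] (hμne : μ ≠ 0) (hμ : μ (Iic 0) = 0)
    (hmom : ∫⁻ z in Ioi 0, ENNReal.ofReal z ∂μ < ⊤) :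
    (∫⁻ z in Ioi 0, ENNReal.ofReal z ∂μ)
      < Filter.liminf
          (fun x => (∫⁻ z in Ioo 0 x, μ (Ioi (x - z)) * ENNReal.ofReal (π z))
            / ENNReal.ofReal (π x)) atTop :=
  liminf_tail_convolution_ratio_gt_mean_jump_general α C hα hC π hπ_meas hlim μ hμne hμ hmom
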